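/- arXiv:1909.12512 — 5 statements merged into one kernel-verified Lean document; each statement's English description precedes it below -/
import Mathlib

section
/- For a > 0, the function f(t) = √(2t - at²) is positive on (0, 2/a) and satisfies -f'' = f · w where w(t) = (2t - at²)^{-2}; i.e., f solves the Ermakov–Pinney equation -y'' = 1/y³ on (0, 2/a). -/
/-!
For a quadratic `q` with `q t > 0`, the chain and quotient rules give
`(√q)'' = (2 q q'' - q'²) / (4 (√q)³)`, and for `q = p s² + b s + c` the numerator is the
constant `4 p c - b²`. So `√q` solves `y'' = (4 p c - b²) / (4 y³)`; for `q = 2t - a t²` the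
constant is `-4`, which is the Ermakov–Pinney equation `-y'' = 1 / y³`.
-/

open Real Set Filter Topology

section SqrtQuadratic

variable {p b c t : ℝ}

theorem hasDerivAt_sqrt_quadratic (ht : 0 < p * t ^ 2 + b * t + c) :
    HasDerivAt (fun s => √(p * s ^ 2 + b * s + c))
      ((2 * p * t + b) / (2 * √(p * t ^ 2 + b * t + c))) t := by
  have hq : HasDerivAt (fun s => p * s ^ 2 + b * s + c) (2 * p * t + b) t :=
    (((hasDerivAt_pow 2 t).const_mul p).add ((hasDerivAt_id' t).const_mul b)).add_const c
      |>.congr_deriv (by push_cast; ring)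
  exact hq.sqrt ht.ne'

theorem deriv_sqrt_quadratic_eventuallyEq (ht : 0 < p * t ^ 2 + b * t + c) :
    deriv (fun s => √(p * s ^ 2 + b * s + c)) =ᶠ[𝓝 t]
      fun s => (2 * p * s + b) / (2 * √(p * s ^ 2 + b * s + c)) := by
  have hpos : ∀ᶠ s in 𝓝 t, 0 < p * s ^ 2 + b * s + c :=
    continuousAt_const.eventually_lt (by fun_prop) ht
  exact hpos.mono fun s hs => (hasDerivAt_sqrt_quadratic hs).deriv

theorem hasDerivAt_deriv_sqrt_quadratic (ht : 0 < p * t ^ 2 + b * t + c) :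
    HasDerivAt (deriv fun s => √(p * s ^ 2 + b * s + c))
      ((4 * p * c - b ^ 2) / (4 * √(p * t ^ 2 + b * t + c) ^ 3)) t := by
  have hnum : HasDerivAt (fun s => 2 * p * s + b) (2 * p) t := by
    simpa using ((hasDerivAt_id t).const_mul (2 * p)).add_const b
  have hquot := hnum.div ((hasDerivAt_sqrt_quadratic ht).const_mul 2) (by positivity)
  refine (hquot.congr_of_eventuallyEq (deriv_sqrt_quadratic_eventuallyEq ht)).congr_deriv ?_
  have hy : 0 < √(p * t ^ 2 + b * t + c) := sqrt_pos.mpr ht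
  have hy_sq := sq_sqrt ht.le
  generalize √(p * t ^ 2 + b * t + c) = y at hy hy_sq ⊢
  field_simp
  linear_combination 16 * p * hy_sq

end SqrtQuadratic

theorem two_mul_sub_mul_sq_pos {a t : ℝ} (ha : 0 < a) (ht : t ∈ Ioo 0 (2 / a)) :
    0 < 2 * t - a * t ^ 2 := by
  have hat : a * t < 2 := (lt_div_iff₀' ha).mp ht.2
  nlinarith [ht.1]

theorem ermakov_pinney_sqrt_parabola (a : ℝ) (ha : 0 < a) :
    ∀ t ∈ Ioo (0 : ℝ) (2 / a),
      0 < Real.sqrt (2 * t - a * t ^ 2) ∧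
      deriv (deriv (fun t : ℝ => Real.sqrt (2 * t - a * t ^ 2))) t =
        -(Real.sqrt (2 * t - a * t ^ 2) * ((2 * t - a * t ^ 2) ^ 2)⁻¹) := by
  intro t ht
  have hg : 0 < 2 * t - a * t ^ 2 := two_mul_sub_mul_sq_pos ha ht
  have hquad : ∀ s : ℝ, 2 * s - a * s ^ 2 = -a * s ^ 2 + 2 * s + 0 := fun s => by ring
  simp only [hquad] at hg ⊢
  refine ⟨sqrt_pos.mpr hg, (hasDerivAt_deriv_sqrt_quadratic hg).deriv.trans ?_⟩
  have hy : 0 < √(-a * t ^ 2 + 2 * t + 0) := sqrt_pos.mpr hg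
  have hy_sq := sq_sqrt hg.le
  generalize √(-a * t ^ 2 + 2 * t + 0) = y at hy hy_sq ⊢
  rw [← hy_sq]
  field_simp
  ring
end

section
/- For all a, M, ξ > 0, the function u_ξ(t) = √(2t - at²) · cos((ξ/2) · log(Mt/(2 - at))) satisfies the ODE -u'' = (1 + ξ²) · (2t - at²)^{-2} · u on the interval (2/(M e^{π/ξ} + a), 2/(M + a)). -/
/-!
Write `p t = 2 t - a t²` and `θ t = (ξ / 2) log (M t / (2 - a t))`, so that `θ' = ξ / p`.
For any `p > 0` and any phase with `θ' = c / p`, the function `u = √p cos θ` satisfies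
`u'' = (2 p p'' - p'² - 4 c²) / (4 p²) · u`; the terms in `sin θ` cancel exactly because
`θ' p` is constant. For the quadratic `p` above, `2 p p'' - p'² = -4` identically, which gives
the coefficient `-(1 + ξ²) / p²`.
-/

open Real Set Filter Topology

section SqrtMulCos

variable {p p' θ : ℝ → ℝ} {c q t : ℝ}

theorem hasDerivAt_sqrt_mul_cos (hp : HasDerivAt p (p' t) t) (hpos : 0 < p t)
    (hθ : HasDerivAt θ (c / p t) t) :
    HasDerivAt (fun s => √(p s) * cos (θ s))
      ((p' t * cos (θ t) - 2 * c * sin (θ t)) / (2 * √(p t))) t := by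
  refine ((hp.sqrt hpos.ne').mul hθ.cos).congr_deriv ?_
  obtain ⟨r, hr0, hr⟩ : ∃ r, 0 < r ∧ p t = r ^ 2 :=
    ⟨√(p t), sqrt_pos.mpr hpos, (sq_sqrt hpos.le).symm⟩
  rw [hr, sqrt_sq hr0.le]
  field_simp
  ring

theorem hasDerivAt_deriv_sqrt_mul_cos (hp : HasDerivAt p (p' t) t) (hpos : 0 < p t)
    (hθ : HasDerivAt θ (c / p t) t) (hp' : HasDerivAt p' q t) :
    HasDerivAt (fun s => (p' s * cos (θ s) - 2 * c * sin (θ s)) / (2 * √(p s)))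
      ((2 * p t * q - p' t ^ 2 - 4 * c ^ 2) / (4 * p t ^ 2) * (√(p t) * cos (θ t))) t := by
  have hnum := (hp'.mul hθ.cos).sub (hθ.sin.const_mul (2 * c))
  refine (hnum.div ((hp.sqrt hpos.ne').const_mul 2) (by positivity)).congr_deriv ?_
  obtain ⟨r, hr0, hr⟩ : ∃ r, 0 < r ∧ p t = r ^ 2 :=
    ⟨√(p t), sqrt_pos.mpr hpos, (sq_sqrt hpos.le).symm⟩
  simp only [Pi.mul_apply, Pi.sub_apply]
  rw [hr, sqrt_sq hr0.le]
  field_simp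
  ring

theorem deriv_deriv_sqrt_mul_cos
    (h : ∀ᶠ s in 𝓝 t, HasDerivAt p (p' s) s ∧ 0 < p s ∧ HasDerivAt θ (c / p s) s)
    (hp' : HasDerivAt p' q t) :
    deriv (deriv fun s => √(p s) * cos (θ s)) t =
      (2 * p t * q - p' t ^ 2 - 4 * c ^ 2) / (4 * p t ^ 2) * (√(p t) * cos (θ t)) := by
  have hderiv : deriv (fun s => √(p s) * cos (θ s)) =ᶠ[𝓝 t]
      fun s => (p' s * cos (θ s) - 2 * c * sin (θ s)) / (2 * √(p s)) := by
    filter_upwards [h] with s ⟨hps, hpos, hθ⟩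
    exact (hasDerivAt_sqrt_mul_cos hps hpos hθ).deriv
  obtain ⟨hpt, hpos, hθ⟩ := h.self_of_nhds
  rw [hderiv.deriv_eq, (hasDerivAt_deriv_sqrt_mul_cos hpt hpos hθ hp').deriv]

end SqrtMulCos

theorem hasDerivAt_two_mul_sub_mul_sq (a t : ℝ) :
    HasDerivAt (fun s : ℝ => 2 * s - a * s ^ 2) (2 - 2 * a * t) t :=
  (((hasDerivAt_id t).const_mul 2).sub ((hasDerivAt_pow 2 t).const_mul a)).congr_deriv (by ring)

theorem hasDerivAt_half_mul_log_div {a M t : ℝ} (ξ : ℝ) (hM : M ≠ 0)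
    (ht : 2 * t - a * t ^ 2 ≠ 0) :
    HasDerivAt (fun s => ξ / 2 * log (M * s / (2 - a * s))) (ξ / (2 * t - a * t ^ 2)) t := by
  have ht0 : t ≠ 0 := by rintro rfl; simp at ht
  have hat : 2 - a * t ≠ 0 := by rintro h; apply ht; linear_combination t * h
  have hquot : HasDerivAt (fun s => M * s / (2 - a * s))
      ((M * 1 * (2 - a * t) - M * t * (0 - a * 1)) / (2 - a * t) ^ 2) t :=
    ((hasDerivAt_id t).const_mul M).div ((hasDerivAt_const t 2).sub
      ((hasDerivAt_id t).const_mul a)) hat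
  refine ((hquot.log (by positivity)).const_mul (ξ / 2)).congr_deriv ?_
  field_simp
  ring

theorem two_mul_sub_mul_sq_pos_of_mem_Ioo {a M ξ t : ℝ} (ha : 0 < a) (hM : 0 < M)
    (ht : t ∈ Ioo (2 / (M * exp (π / ξ) + a)) (2 / (M + a))) : 0 < 2 * t - a * t ^ 2 := by
  have ht0 : 0 < t := lt_trans (by positivity) ht.1
  have hat : (M + a) * t < 2 := (lt_div_iff₀' (by positivity)).mp ht.2
  nlinarith

theorem generalized_eigenfunction_ode_general (a M ξ : ℝ) (ha : 0 < a) (hM : 0 < M) :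
    ∀ t ∈ Ioo (2 / (M * Real.exp (π / ξ) + a)) (2 / (M + a)),
      deriv (deriv (fun t : ℝ =>
          Real.sqrt (2 * t - a * t ^ 2) *
            Real.cos (ξ / 2 * Real.log (M * t / (2 - a * t))))) t =
        -((1 + ξ ^ 2) * ((2 * t - a * t ^ 2) ^ 2)⁻¹ *
          (Real.sqrt (2 * t - a * t ^ 2) *
            Real.cos (ξ / 2 * Real.log (M * t / (2 - a * t))))) := by
  intro t ht
  have hpos : ∀ᶠ s in 𝓝 t, 0 < 2 * s - a * s ^ 2 :=
    continuousAt_const.eventually_lt (hasDerivAt_two_mul_sub_mul_sq a t).continuousAt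
      (two_mul_sub_mul_sq_pos_of_mem_Ioo ha hM ht)
  have hp' : HasDerivAt (fun s : ℝ => 2 - 2 * a * s) (-(2 * a * 1)) t :=
    ((hasDerivAt_id' t).const_mul (2 * a)).const_sub 2
  rw [deriv_deriv_sqrt_mul_cos (hpos.mono fun s hs => ⟨hasDerivAt_two_mul_sub_mul_sq a s, hs,
    hasDerivAt_half_mul_log_div ξ hM.ne' hs.ne'⟩) hp']
  field_simp
  ring

theorem generalized_eigenfunction_ode (a M ξ : ℝ) (ha : 0 < a) (hM : 0 < M) (hξ : 0 < ξ) :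
    ∀ t ∈ Ioo (2 / (M * Real.exp (π / ξ) + a)) (2 / (M + a)),
      deriv (deriv (fun t : ℝ =>
          Real.sqrt (2 * t - a * t ^ 2) *
            Real.cos (ξ / 2 * Real.log (M * t / (2 - a * t))))) t =
        -((1 + ξ ^ 2) * ((2 * t - a * t ^ 2) ^ 2)⁻¹ *
          (Real.sqrt (2 * t - a * t ^ 2) *
            Real.cos (ξ / 2 * Real.log (M * t / (2 - a * t))))) :=
  generalized_eigenfunction_ode_general a M ξ ha hM
end

section
/- Let p ∈ C¹(a,b) with p > 0 and f ∈ C²(a,b) with f > 0, and suppose ∫_a^c 1/(p f²) dt = ∫_c^b 1/(p f²) dt = ∞ for some (hence every) c ∈ (a,b). Then every solution of -(p y')' + (q - w) y = 0 on (a,b), where q, w are such that -(p f')' + (q-w)f = 0, that is linearly independent from f (i.e., of the form αf + βf∫_c^t (p f²)^{-1} ds with β ≠ 0) is negative somewhere in (a,b). -/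
open Real Set MeasureTheory

/-- If the lintegral of a positive continuous function over `Ioo c b` is infinite,
the interval integrals from `c` become arbitrarily large. -/
lemma unbounded_right (a b c M : ℝ) (g : ℝ → ℝ) (hc : c ∈ Ioo a b)
    (hg : ContinuousOn g (Ioo a b)) (hgpos : ∀ t ∈ Ioo a b, 0 ≤ g t)
    (hdiv : ∫⁻ t in Ioo c b, ENNReal.ofReal (g t) = ⊤) :
    ∃ t ∈ Ioo c b, M < ∫ s in c..t, g s := by
  by_contra h
  push_neg at h
  set μ := MeasureTheory.Measure.withDensity volume (fun s => ENNReal.ofReal (g s)) with hμ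
  have hbnd : ∀ t ∈ Ioo c b, μ (Ioo c t) ≤ ENNReal.ofReal M := by
    intro t ht
    have hsub : Icc c t ⊆ Ioo a b := by
      intro x hx
      exact ⟨lt_of_lt_of_le hc.1 hx.1, lt_of_le_of_lt hx.2 ht.2⟩
    have hint : IntegrableOn g (Ioo c t) := by
      have : IntegrableOn g (Icc c t) :=
        (hg.mono hsub).integrableOn_compact isCompact_Icc
      exact this.mono_set Ioo_subset_Icc_self
    have hnn : 0 ≤ᵐ[volume.restrict (Ioo c t)] g := by
      filter_upwards [ae_restrict_mem measurableSet_Ioo] with x hx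
      exact hgpos x (hsub (Ioo_subset_Icc_self hx))
    have : μ (Ioo c t) = ENNReal.ofReal (∫ s in Ioo c t, g s) := by
      rw [hμ, withDensity_apply _ measurableSet_Ioo,
        ofReal_integral_eq_lintegral_ofReal hint hnn]
    rw [this]
    apply ENNReal.ofReal_le_ofReal
    have := h t ht
    rwa [intervalIntegral.integral_of_le ht.1.le,
      MeasureTheory.integral_Ioc_eq_integral_Ioo] at this
  have hunion : (⋃ n : ℕ, Ioo c (b - (b - c) / (n + 1))) = Ioo c b := by
    ext x
    simp only [mem_iUnion, mem_Ioo]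
    constructor
    · rintro ⟨n, hx1, hx2⟩
      refine ⟨hx1, hx2.trans_le ?_⟩
      have : 0 < (b - c) / ((n : ℝ) + 1) := by
        apply div_pos (by linarith [hc.1, hc.2]) (by positivity)
      linarith
    · rintro ⟨hx1, hx2⟩
      obtain ⟨n, hn⟩ := exists_nat_gt ((b - c) / (b - x))
      refine ⟨n, hx1, ?_⟩
      have hbx : 0 < b - x := by linarith
      have h1 : (b - c) / (b - x) < (n : ℝ) + 1 := by linarith [hn]
      have h2 : b - c < ((n : ℝ) + 1) * (b - x) := by
        rwa [div_lt_iff₀ hbx] at h1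
      have hn1 : (0 : ℝ) < (n : ℝ) + 1 := by positivity
      have h3 : (b - c) / ((n : ℝ) + 1) < b - x := by
        rw [div_lt_iff₀ hn1]; nlinarith
      linarith
  have hdir : Directed (· ⊆ ·) (fun n : ℕ => Ioo c (b - (b - c) / (n + 1))) := by
    apply Monotone.directed_le
    intro m n hmn
    apply Ioo_subset_Ioo le_rfl
    have : (b - c) / (n + 1) ≤ (b - c) / (m + 1) := by
      apply div_le_div_of_nonneg_left (by linarith [hc.2, hc.1]) (by positivity)
      exact_mod_cast by omega
    linarith
  have htop : μ (Ioo c b) = ⊤ := by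
    rw [hμ, withDensity_apply _ measurableSet_Ioo]; exact hdiv
  have : μ (Ioo c b) ≤ ENNReal.ofReal M := by
    rw [← hunion, hdir.measure_iUnion]
    apply iSup_le
    intro n
    rcases le_or_gt (b - (b - c) / (n + 1)) c with hle | hlt
    · rw [Ioo_eq_empty (by exact fun h => absurd h (not_lt.mpr hle))]
      simp
    · apply hbnd
      refine ⟨hlt, ?_⟩
      have : 0 < (b - c) / ((n : ℝ) + 1) := by
        apply div_pos (by linarith [hc.1, hc.2]) (by positivity)
      linarith
  rw [htop] at this
  exact absurd (this.trans_lt ENNReal.ofReal_lt_top) (lt_irrefl _)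

/-- Left-side version. -/
lemma unbounded_left (a b c M : ℝ) (g : ℝ → ℝ) (hc : c ∈ Ioo a b)
    (hg : ContinuousOn g (Ioo a b)) (hgpos : ∀ t ∈ Ioo a b, 0 ≤ g t)
    (hdiv : ∫⁻ t in Ioo a c, ENNReal.ofReal (g t) = ⊤) :
    ∃ t ∈ Ioo a c, M < ∫ s in t..c, g s := by
  by_contra h
  push_neg at h
  set μ := MeasureTheory.Measure.withDensity volume (fun s => ENNReal.ofReal (g s)) with hμ
  have hbnd : ∀ t ∈ Ioo a c, μ (Ioo t c) ≤ ENNReal.ofReal M := by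
    intro t ht
    have hsub : Icc t c ⊆ Ioo a b := by
      intro x hx
      exact ⟨lt_of_lt_of_le ht.1 hx.1, lt_of_le_of_lt hx.2 hc.2⟩
    have hint : IntegrableOn g (Ioo t c) := by
      have : IntegrableOn g (Icc t c) :=
        (hg.mono hsub).integrableOn_compact isCompact_Icc
      exact this.mono_set Ioo_subset_Icc_self
    have hnn : 0 ≤ᵐ[volume.restrict (Ioo t c)] g := by
      filter_upwards [ae_restrict_mem measurableSet_Ioo] with x hx
      exact hgpos x (hsub (Ioo_subset_Icc_self hx))
    have : μ (Ioo t c) = ENNReal.ofReal (∫ s in Ioo t c, g s) := by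
      rw [hμ, withDensity_apply _ measurableSet_Ioo,
        ofReal_integral_eq_lintegral_ofReal hint hnn]
    rw [this]
    apply ENNReal.ofReal_le_ofReal
    have := h t ht
    rwa [intervalIntegral.integral_of_le ht.2.le,
      MeasureTheory.integral_Ioc_eq_integral_Ioo] at this
  have hunion : (⋃ n : ℕ, Ioo (a + (c - a) / (n + 1)) c) = Ioo a c := by
    ext x
    simp only [mem_iUnion, mem_Ioo]
    constructor
    · rintro ⟨n, hx1, hx2⟩
      refine ⟨lt_of_le_of_lt ?_ hx1, hx2⟩
      have : 0 < (c - a) / (n + 1) := by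
        apply div_pos (by linarith [hc.1]) (by positivity)
      linarith
    · rintro ⟨hx1, hx2⟩
      obtain ⟨n, hn⟩ := exists_nat_gt ((c - a) / (x - a))
      refine ⟨n, ?_, hx2⟩
      have hxa : 0 < x - a := by linarith
      have h1 : (c - a) / (x - a) < (n : ℝ) + 1 := by linarith [hn]
      have h2 : c - a < ((n : ℝ) + 1) * (x - a) := by
        rwa [div_lt_iff₀ hxa] at h1
      have hn1 : (0 : ℝ) < (n : ℝ) + 1 := by positivity
      have h3 : (c - a) / ((n : ℝ) + 1) < x - a := by
        rw [div_lt_iff₀ hn1]; nlinarith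
      linarith
  have hdir : Directed (· ⊆ ·) (fun n : ℕ => Ioo (a + (c - a) / (n + 1)) c) := by
    apply Monotone.directed_le
    intro m n hmn
    apply Ioo_subset_Ioo _ le_rfl
    have : (c - a) / (n + 1) ≤ (c - a) / (m + 1) := by
      apply div_le_div_of_nonneg_left (by linarith [hc.1]) (by positivity)
      exact_mod_cast by omega
    linarith
  have htop : μ (Ioo a c) = ⊤ := by
    rw [hμ, withDensity_apply _ measurableSet_Ioo]; exact hdiv
  have : μ (Ioo a c) ≤ ENNReal.ofReal M := by
    rw [← hunion, hdir.measure_iUnion]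
    apply iSup_le
    intro n
    rcases le_or_gt c (a + (c - a) / (n + 1)) with hle | hlt
    · rw [Ioo_eq_empty (by exact fun h => absurd h (not_lt.mpr hle))]
      simp
    · apply hbnd
      refine ⟨?_, hlt⟩
      have : 0 < (c - a) / ((n : ℝ) + 1) := by
        apply div_pos (by linarith [hc.1]) (by positivity)
      linarith
  rw [htop] at this
  exact absurd (this.trans_lt ENNReal.ofReal_lt_top) (lt_irrefl _)

theorem linearly_independent_solution_negative_somewhere
    (a b c α β C₀ : ℝ) (p f : ℝ → ℝ)
    (hab : a < b) (hc : c ∈ Ioo a b)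
    (hp : ContDiffOn ℝ 1 p (Ioo a b)) (hppos : ∀ t ∈ Ioo a b, 0 < p t)
    (hf : ContDiffOn ℝ 2 f (Ioo a b)) (hfpos : ∀ t ∈ Ioo a b, 0 < f t)
    (hdiv₁ : ∫⁻ t in Ioo a c, ENNReal.ofReal ((p t * f t ^ 2)⁻¹) = ⊤)
    (hdiv₂ : ∫⁻ t in Ioo c b, ENNReal.ofReal ((p t * f t ^ 2)⁻¹) = ⊤)
    (hβ : β ≠ 0) :
    ∃ t ∈ Ioo a b,
      α * f t + β * f t * (∫ s in c..t, (p s * f s ^ 2)⁻¹) < 0 := by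
  set g : ℝ → ℝ := fun s => (p s * f s ^ 2)⁻¹ with hg
  have hgcont : ContinuousOn g (Ioo a b) := by
    apply ContinuousOn.inv₀
    · exact hp.continuousOn.mul (hf.continuousOn.pow 2)
    · intro x hx
      have := hppos x hx; have := hfpos x hx
      positivity
  have hgnn : ∀ t ∈ Ioo a b, 0 ≤ g t := by
    intro t ht
    have := hppos t ht; have := hfpos t ht
    positivity
  rcases lt_or_gt_of_ne hβ with hβneg | hβpos
  · -- β < 0: go right, integral large positive
    obtain ⟨t, ht, hM⟩ := unbounded_right a b c (α / (-β)) g hc hgcont hgnn hdiv₂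
    have htab : t ∈ Ioo a b := ⟨hc.1.trans ht.1, ht.2⟩
    refine ⟨t, htab, ?_⟩
    have hft := hfpos t htab
    have hβ' : 0 < -β := by linarith
    have h1 : α / (-β) * (-β) < (∫ s in c..t, g s) * (-β) :=
      mul_lt_mul_of_pos_right hM hβ'
    rw [div_mul_cancel₀ _ (ne_of_gt hβ')] at h1
    nlinarith [hft]
  · -- β > 0: go left, integral large negative
    obtain ⟨t, ht, hM⟩ := unbounded_left a b c (α / β) g hc hgcont hgnn hdiv₁
    have htab : t ∈ Ioo a b := ⟨ht.1, ht.2.trans hc.2⟩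
    refine ⟨t, htab, ?_⟩
    have hft := hfpos t htab
    have heq : (∫ s in c..t, g s) = -(∫ s in t..c, g s) :=
      (intervalIntegral.integral_symm t c)
    rw [heq]
    have h1 : α / β * β < (∫ s in t..c, g s) * β :=
      mul_lt_mul_of_pos_right hM hβpos
    rw [div_mul_cancel₀ _ (ne_of_gt hβpos)] at h1
    nlinarith [hft]
end

section
/- Improved Hardy inequality on a finite interval: for a ∈ (0, 1/L] and every φ ∈ C_c^∞(0, L), ∫_0^L φ'(t)² dt ≥ ∫_0^L φ(t)²/(2t - at²)² dt, and the weight (2t - at²)^{-2} ≥ (2t)^{-2} with strict inequality for t ∈ (0,L). -/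
open Real Set MeasureTheory

theorem improved_hardy_on_finite_interval (L a : ℝ)
    (hL : 0 < L) (ha : 0 < a) (haL : a ≤ 1 / L) :
    (∀ φ : ℝ → ℝ, ContDiff ℝ (⊤ : ℕ∞) φ → HasCompactSupport φ →
      tsupport φ ⊆ Ioo (0 : ℝ) L →
      ∫ t in Ioo (0 : ℝ) L, (deriv φ t) ^ 2 ≥
        ∫ t in Ioo (0 : ℝ) L, (φ t) ^ 2 * ((2 * t - a * t ^ 2) ^ 2)⁻¹) ∧
    (∀ t ∈ Ioo (0 : ℝ) L, ((2 * t) ^ 2)⁻¹ < ((2 * t - a * t ^ 2) ^ 2)⁻¹) := by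
  have hLa : L ≤ 1 / a := by
    rw [le_div_iff₀ ha]
    rw [le_div_iff₀ hL] at haL
    linarith
  -- positivity of the weight on (0, 2/a)
  have hw : ∀ t ∈ Ioo (0 : ℝ) (2 / a), 0 < 2 * t - a * t ^ 2 := by
    rintro t ⟨ht0, ht2⟩
    have : a * t < 2 := by
      rw [lt_div_iff₀ ha] at ht2; linarith [mul_comm t a]
    nlinarith
  have hsub : Ioo (0 : ℝ) L ⊆ Ioo 0 (2 / a) := by
    apply Ioo_subset_Ioo le_rfl
    have h1 : (1 : ℝ) / a < 2 / a := by
      rw [div_lt_div_iff₀ ha ha]; linarith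
    linarith
  constructor
  · -- the Hardy inequality
    intro φ hφ hφc hφs
    set g : ℝ → ℝ := fun t => (1 - a * t) / (2 * t - a * t ^ 2) with hg_def
    set H : ℝ → ℝ := fun t =>
      2 * φ t * deriv φ t * g t + φ t ^ 2 * (-((2 * t - a * t ^ 2) ^ 2)⁻¹ - g t ^ 2) with hH_def
    -- derivative of g
    have hg' : ∀ t ∈ Ioo (0 : ℝ) (2 / a),
        HasDerivAt g (-((2 * t - a * t ^ 2) ^ 2)⁻¹ - g t ^ 2) t := by
      intro t ht
      have hden : 2 * t - a * t ^ 2 ≠ 0 := ne_of_gt (hw t ht)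
      have h1 : HasDerivAt (fun t : ℝ => 1 - a * t) (-a) t := by
        simpa using ((hasDerivAt_id t).const_mul a).const_sub 1
      have h2 : HasDerivAt (fun t : ℝ => 2 * t - a * t ^ 2) (2 - a * (2 * t)) t := by
        have := ((hasDerivAt_pow 2 t).const_mul a)
        simpa using ((hasDerivAt_id t).const_mul 2).fun_sub this
      have := h1.fun_div h2 hden
      refine this.congr_deriv ?_
      simp only [g]
      field_simp
      ring
    -- continuity of g
    have hgc : ContinuousOn g (Ioo 0 (2 / a)) := by
      apply ContinuousOn.div (by fun_prop) (by fun_prop)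
      exact fun t ht => ne_of_gt (hw t ht)
    have hφcont : Continuous φ := hφ.continuous
    have hφ'cont : Continuous (deriv φ) := hφ.continuous_deriv (by simp)
    have hHc : ContinuousOn H (Ioo 0 (2 / a)) := by
      apply ContinuousOn.add
      · exact (by fun_prop : Continuous fun t => 2 * φ t * deriv φ t).continuousOn.mul hgc
      · apply ContinuousOn.mul (by fun_prop)
        apply ContinuousOn.sub
        · exact (ContinuousOn.inv₀ (by fun_prop)
            (fun t ht => pow_ne_zero 2 (ne_of_gt (hw t ht)))).neg
        · exact hgc.pow 2
    -- pointwise inequality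
    have hpt : ∀ t ∈ Ioo (0 : ℝ) L,
        φ t ^ 2 * ((2 * t - a * t ^ 2) ^ 2)⁻¹ + H t ≤ (deriv φ t) ^ 2 := by
      intro t _
      simp only [hH_def]
      nlinarith [sq_nonneg (deriv φ t - φ t * g t)]
    -- integrability of (deriv φ)^2
    have hI1 : IntegrableOn (fun t => (deriv φ t) ^ 2) (Ioo 0 L) := by
      apply Integrable.integrableOn
      apply Continuous.integrable_of_hasCompactSupport (by fun_prop)
      exact (hφc.deriv.comp_left (g := fun x : ℝ => x ^ 2) (by simp))
    by_cases hKe : (tsupport φ) = ∅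
    · -- trivial case: φ ≡ 0
      have hz : ∀ t, φ t = 0 := fun t =>
        image_eq_zero_of_notMem_tsupport (by simp [hKe])
      have : ∫ t in Ioo (0 : ℝ) L, (φ t) ^ 2 * ((2 * t - a * t ^ 2) ^ 2)⁻¹ = 0 := by
        apply integral_eq_zero_of_ae
        filter_upwards with t
        simp [hz t]
      rw [this]
      apply setIntegral_nonneg measurableSet_Ioo
      intro t _; positivity
    -- main case
    have hKne : (tsupport φ).Nonempty := nonempty_iff_ne_empty.2 hKe
    have hKcp : IsCompact (tsupport φ) := hφc
    set c := sInf (tsupport φ) with hc_def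
    set d := sSup (tsupport φ) with hd_def
    have hcK : c ∈ tsupport φ := hKcp.sInf_mem hKne
    have hdK : d ∈ tsupport φ := hKcp.sSup_mem hKne
    have hc0 : 0 < c := (hφs hcK).1
    have hdL : d < L := (hφs hdK).2
    have hcd : c ≤ d := csInf_le_csSup hKne hKcp.bddBelow hKcp.bddAbove
    set c' := c / 2 with hc'_def
    set d' := (d + L) / 2 with hd'_def
    have hc'0 : 0 < c' := by positivity
    have hc'c : c' < c := by simp only [hc'_def]; linarith
    have hdd' : d < d' := by simp only [hd'_def]; linarith
    have hd'L : d' < L := by simp only [hd'_def]; linarith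
    have hc'd' : c' ≤ d' := by linarith
    have hIccsub : Icc c' d' ⊆ Ioo 0 (2 / a) := by
      intro t ht
      have h1 : (1 : ℝ) / a < 2 / a := by
        rw [div_lt_div_iff₀ ha ha]; linarith
      exact ⟨lt_of_lt_of_le hc'0 ht.1, by linarith [ht.2]⟩
    have hKsub : tsupport φ ⊆ Icc c d := fun t ht =>
      ⟨csInf_le hKcp.bddBelow ht, le_csSup hKcp.bddAbove ht⟩
    -- H vanishes off the support
    have hH0 : ∀ t, t ∉ tsupport φ → H t = 0 := by
      intro t ht
      have h1 : φ t = 0 := image_eq_zero_of_notMem_tsupport ht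
      have h2 : deriv φ t = 0 := by
        by_contra h
        exact ht (support_deriv_subset (by simpa using h))
      simp [hH_def, h1, h2]
    have hH0' : ∀ t, t ∉ Icc c' d' → H t = 0 := by
      intro t ht
      apply hH0
      intro htK
      exact ht ⟨le_trans hc'c.le (hKsub htK).1, le_trans (hKsub htK).2 hdd'.le⟩
    -- integrability of H
    have hHIcc : IntegrableOn H (Icc c' d') :=
      (hHc.mono hIccsub).integrableOn_compact isCompact_Icc
    have hHint : IntegrableOn H (Ioo 0 L) := by
      have : IntegrableOn H (Icc c' d' ∪ (Ioo 0 L \ Icc c' d')) := by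
        apply hHIcc.union
        apply (integrableOn_congr_fun (g := fun _ => (0:ℝ)) ?_ ?_).2
        · simp [integrableOn_zero]
        · exact fun t ht => hH0' t ht.2
        · exact measurableSet_Ioo.diff measurableSet_Icc
      exact this.mono_set (fun t ht => by
        by_cases h : t ∈ Icc c' d' <;> [left; exact Or.inr ⟨ht, h⟩]; exact h)
    -- the integral of H is zero (FTC)
    have hF : ∀ t ∈ uIcc c' d', HasDerivAt (fun t => φ t ^ 2 * g t) (H t) t := by
      intro t ht
      rw [uIcc_of_le hc'd'] at ht
      have h1 : HasDerivAt φ (deriv φ t) t :=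
        (hφ.differentiable (by simp) t).hasDerivAt
      have h2 := (h1.fun_pow 2).fun_mul (hg' t (hIccsub ht))
      refine h2.congr_deriv ?_
      simp only [H]
      ring
    have hφc' : φ c' = 0 := by
      apply image_eq_zero_of_notMem_tsupport
      intro h
      exact absurd (csInf_le hKcp.bddBelow h) (not_le.2 hc'c)
    have hφd' : φ d' = 0 := by
      apply image_eq_zero_of_notMem_tsupport
      intro h
      exact absurd (le_csSup hKcp.bddAbove h) (not_le.2 hdd')
    have hHzero : ∫ t in Ioo (0 : ℝ) L, H t = 0 := by
      have e1 : ∫ t in Ioo (0 : ℝ) L, H t = ∫ t in Icc c' d', H t := by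
        apply setIntegral_eq_of_subset_of_forall_diff_eq_zero measurableSet_Ioo
        · exact fun t ht => ⟨lt_of_lt_of_le hc'0 ht.1, lt_of_le_of_lt ht.2 hd'L⟩
        · exact fun t ht => hH0' t ht.2
      have e2 : ∫ t in Icc c' d', H t = ∫ t in c'..d', H t := by
        rw [intervalIntegral.integral_of_le hc'd', integral_Icc_eq_integral_Ioc]
      have e3 : ∫ t in c'..d', H t = φ d' ^ 2 * g d' - φ c' ^ 2 * g c' := by
        apply intervalIntegral.integral_eq_sub_of_hasDerivAt hF
        apply IntegrableOn.intervalIntegrable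
        rwa [uIcc_of_le hc'd']
      rw [e1, e2, e3, hφc', hφd']
      ring
    -- integrability of the weighted term
    have hwint : IntegrableOn
        (fun t => (φ t) ^ 2 * ((2 * t - a * t ^ 2) ^ 2)⁻¹) (Ioo 0 L) := by
      apply Integrable.mono' (hI1.sub hHint)
      · apply Measurable.aestronglyMeasurable
        fun_prop
      · rw [ae_restrict_iff' measurableSet_Ioo]
        filter_upwards with t ht
        have h1 := hpt t ht
        have h2 : (0:ℝ) ≤ (φ t) ^ 2 * ((2 * t - a * t ^ 2) ^ 2)⁻¹ := by positivity
        rw [Real.norm_eq_abs, abs_of_nonneg h2]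
        simp only [Pi.sub_apply]
        linarith
    -- conclude
    have hmono : ∫ t in Ioo (0 : ℝ) L,
        ((φ t) ^ 2 * ((2 * t - a * t ^ 2) ^ 2)⁻¹ + H t) ≤
        ∫ t in Ioo (0 : ℝ) L, (deriv φ t) ^ 2 := by
      apply setIntegral_mono_on (hwint.add hHint) hI1 measurableSet_Ioo
      exact hpt
    rw [integral_add hwint hHint, hHzero, add_zero] at hmono
    exact hmono
  · -- strict comparison of weights
    rintro t ⟨ht0, htL⟩
    have hwt : 0 < 2 * t - a * t ^ 2 := hw t (hsub ⟨ht0, htL⟩)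
    have hlt : 2 * t - a * t ^ 2 < 2 * t := by nlinarith [mul_pos ha (pow_pos ht0 2)]
    have h1 : 0 < (2 * t - a * t ^ 2) ^ 2 := by positivity
    apply inv_strictAnti₀ h1
    nlinarith
end

section
/- Ground-state criterion for Hardy inequalities in 1D: if f ∈ C²(a,b) is positive and satisfies -f'' + q f ≥ w f on (a,b) with w ≥ 0, then for every φ ∈ C_c^∞(a,b), ∫_a^b (φ'² + qφ²) dt ≥ ∫_a^b w φ² dt. -/
open Real Set MeasureTheory

/-- Gluing: continuous on an open set, zero outside a closed subset of it. -/
lemma cont_glue_aux {h : ℝ → ℝ} {U K : Set ℝ} (hU : IsOpen U) (hK : IsClosed K)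
    (hcont : ContinuousOn h U) (hzero : ∀ x ∉ K, h x = 0) (hKU : K ⊆ U) :
    Continuous h := by
  rw [continuous_iff_continuousAt]
  intro x
  by_cases hx : x ∈ U
  · exact hcont.continuousAt (hU.mem_nhds hx)
  · have hxK : x ∉ K := fun h' => hx (hKU h')
    have hev : h =ᶠ[nhds x] (fun _ => (0 : ℝ)) := by
      filter_upwards [hK.isOpen_compl.mem_nhds hxK] with y hy
      exact hzero y hy
    exact ContinuousAt.congr (continuousAt_const) hev.symm

theorem ground_state_criterion_1d (a b : ℝ) (hab : a < b)
    (q w f : ℝ → ℝ)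
    (hq : ContinuousOn q (Ioo a b)) (hw : ContinuousOn w (Ioo a b))
    (hwpos : ∀ t ∈ Ioo a b, 0 ≤ w t)
    (hf : ContDiffOn ℝ 2 f (Ioo a b)) (hfpos : ∀ t ∈ Ioo a b, 0 < f t)
    (hsuper : ∀ t ∈ Ioo a b,
      -(deriv (deriv f) t) + q t * f t ≥ w t * f t) :
    ∀ φ : ℝ → ℝ, ContDiff ℝ (⊤ : ℕ∞) φ → HasCompactSupport φ →
      tsupport φ ⊆ Ioo a b →
      ∫ t in Ioo a b, ((deriv φ t) ^ 2 + q t * (φ t) ^ 2) ≥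
        ∫ t in Ioo a b, w t * (φ t) ^ 2 := by
  intro φ hφ hφc hφs
  set K := tsupport φ with hKdef
  have hKc : IsCompact K := hφc
  have hKcl : IsClosed K := isClosed_tsupport φ
  have hφ0 : ∀ x ∉ K, φ x = 0 := fun x hx => image_eq_zero_of_notMem_tsupport hx
  have hφev : ∀ x ∉ K, φ =ᶠ[nhds x] (fun _ => (0 : ℝ)) := by
    intro x hx
    filter_upwards [hKcl.isOpen_compl.mem_nhds hx] with y hy
    exact hφ0 y hy
  have hdφ0 : ∀ x ∉ K, deriv φ x = 0 := by
    intro x hx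
    rw [(hφev x hx).deriv_eq]
    exact deriv_const x 0
  have hφcont : Continuous φ := hφ.continuous
  have hdφcont : Continuous (deriv φ) := hφ.continuous_deriv (by simp)
  have hIoo : IsOpen (Ioo a b) := isOpen_Ioo
  -- regularity of f
  have hf1 : ContDiffOn ℝ 1 (deriv f) (Ioo a b) :=
    hf.deriv_of_isOpen hIoo (by norm_num)
  have hfd : ∀ t ∈ Ioo a b, HasDerivAt f (deriv f t) t := by
    intro t ht
    exact ((hf.differentiableOn (by norm_num)).differentiableAt
      (hIoo.mem_nhds ht)).hasDerivAt
  have hfd2 : ∀ t ∈ Ioo a b, HasDerivAt (deriv f) (deriv (deriv f) t) t := by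
    intro t ht
    exact ((hf1.differentiableOn (by norm_num)).differentiableAt
      (hIoo.mem_nhds ht)).hasDerivAt
  have hdfcont : ContinuousOn (deriv f) (Ioo a b) :=
    hf.continuousOn_deriv_of_isOpen hIoo (by norm_num)
  have hddfcont : ContinuousOn (deriv (deriv f)) (Ioo a b) :=
    hf1.continuousOn_deriv_of_isOpen hIoo (by norm_num)
  have hfcont : ContinuousOn f (Ioo a b) := hf.continuousOn
  -- the "boundary term" function G and its derivative e on Ioo a b
  set G : ℝ → ℝ := fun t => deriv f t / f t * φ t ^ 2 with hGdef
  set e : ℝ → ℝ := fun t =>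
    (deriv (deriv f) t * f t - deriv f t * deriv f t) / f t ^ 2 * φ t ^ 2 +
      deriv f t / f t * ((2 : ℕ) * φ t ^ 1 * deriv φ t) with hedef
  have hφd : ∀ t, HasDerivAt φ (deriv φ t) t := fun t =>
    ((hφ.differentiable (by simp)) t).hasDerivAt
  have hGd : ∀ t ∈ Ioo a b, HasDerivAt G (e t) t := by
    intro t ht
    have hfne : f t ≠ 0 := (hfpos t ht).ne'
    exact ((hfd2 t ht).div (hfd t ht) hfne).mul ((hφd t).pow 2)
  have hG0 : ∀ x ∉ K, G x = 0 := by
    intro x hx; simp [hGdef, hφ0 x hx]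
  have hGd0 : ∀ x ∉ K, HasDerivAt G 0 x := by
    intro x hx
    have hev : G =ᶠ[nhds x] (fun _ => (0 : ℝ)) := by
      filter_upwards [hKcl.isOpen_compl.mem_nhds hx] with y hy
      exact hG0 y hy
    exact (hasDerivAt_const x (0 : ℝ)).congr_of_eventuallyEq hev
  have hGdiff : ∀ x, DifferentiableAt ℝ G x := by
    intro x
    by_cases hx : x ∈ Ioo a b
    · exact (hGd x hx).differentiableAt
    · exact (hGd0 x (fun h => hx (hφs h))).differentiableAt
  have hderivG : ∀ t ∈ Ioo a b, deriv G t = e t := fun t ht => (hGd t ht).deriv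
  have hderivG0 : ∀ x ∉ K, deriv G x = 0 := fun x hx => (hGd0 x hx).deriv
  -- the three integrands
  set A : ℝ → ℝ := fun t => (deriv φ t) ^ 2 + q t * (φ t) ^ 2 with hAdef
  set B : ℝ → ℝ := fun t => w t * (φ t) ^ 2 with hBdef
  set C : ℝ → ℝ := deriv G with hCdef
  have hA0 : ∀ x ∉ K, A x = 0 := by
    intro x hx; simp [hAdef, hφ0 x hx, hdφ0 x hx]
  have hB0 : ∀ x ∉ K, B x = 0 := by
    intro x hx; simp [hBdef, hφ0 x hx]
  -- continuity
  have hAcontOn : ContinuousOn A (Ioo a b) := by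
    apply ContinuousOn.add
    · exact (hdφcont.continuousOn).pow 2
    · exact hq.mul ((hφcont.continuousOn).pow 2)
  have hBcontOn : ContinuousOn B (Ioo a b) :=
    hw.mul ((hφcont.continuousOn).pow 2)
  have hCcontOn : ContinuousOn C (Ioo a b) := by
    have heCont : ContinuousOn e (Ioo a b) := by
      apply ContinuousOn.add
      · apply ContinuousOn.mul
        · apply ContinuousOn.div
          · exact (hddfcont.mul hfcont).sub (hdfcont.mul hdfcont)
          · exact hfcont.pow 2
          · intro t ht; exact pow_ne_zero 2 (hfpos t ht).ne'
        · exact (hφcont.continuousOn).pow 2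
      · apply ContinuousOn.mul
        · exact hdfcont.div hfcont (fun t ht => (hfpos t ht).ne')
        · exact ((continuous_const.mul (hφcont.pow 1)).mul hdφcont).continuousOn
    exact heCont.congr hderivG
  have hAcont : Continuous A := cont_glue_aux hIoo hKcl hAcontOn hA0 hφs
  have hBcont : Continuous B := cont_glue_aux hIoo hKcl hBcontOn hB0 hφs
  have hCcont : Continuous C := cont_glue_aux hIoo hKcl hCcontOn hderivG0 hφs
  -- integrability
  have hAint : Integrable A :=
    hAcont.integrable_of_hasCompactSupport (HasCompactSupport.intro hKc hA0)
  have hBint : Integrable B :=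
    hBcont.integrable_of_hasCompactSupport (HasCompactSupport.intro hKc hB0)
  have hCint : Integrable C :=
    hCcont.integrable_of_hasCompactSupport (HasCompactSupport.intro hKc hderivG0)
  -- ∫ C over Ioo a b is zero
  have hCzero : ∫ t in Ioo a b, C t = 0 := by
    have h1 : ∫ t in Ioo a b, C t = ∫ t in Ioc a b, C t :=
      (integral_Ioc_eq_integral_Ioo (f := C)).symm
    have h2 : ∫ t in Ioc a b, C t = ∫ t in a..b, C t :=
      (intervalIntegral.integral_of_le hab.le).symm
    have h3 : ∫ t in a..b, C t = G b - G a := by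
      apply intervalIntegral.integral_deriv_eq_sub
      · intro x _; exact hGdiff x
      · exact hCint.intervalIntegrable
    have hGa : G a = 0 := hG0 a (fun h => (lt_irrefl a (hφs h).1))
    have hGb : G b = 0 := hG0 b (fun h => (lt_irrefl b (hφs h).2))
    rw [h1, h2, h3, hGa, hGb, sub_zero]
  -- pointwise inequality on Ioo a b
  have key : ∀ t ∈ Ioo a b, 0 ≤ A t - B t - C t := by
    intro t ht
    have hft : 0 < f t := hfpos t ht
    have hfne : f t ≠ 0 := hft.ne'
    have hs := hsuper t ht
    have hqw : deriv (deriv f) t / f t ≤ q t - w t := by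
      rw [div_le_iff₀ hft]
      nlinarith [hs]
    have hfac : 0 ≤ (q t - w t - deriv (deriv f) t / f t) * φ t ^ 2 :=
      mul_nonneg (by linarith) (sq_nonneg _)
    have hCt : C t = e t := hderivG t ht
    have hexp : A t - B t - C t =
        (deriv φ t - deriv f t / f t * φ t) ^ 2 +
          (q t - w t - deriv (deriv f) t / f t) * φ t ^ 2 := by
      rw [hCt]
      simp only [hAdef, hBdef, hedef]
      field_simp
      ring
    rw [hexp]
    have := sq_nonneg (deriv φ t - deriv f t / f t * φ t)
    linarith
  -- conclude
  have hABint : IntegrableOn (fun t => A t - B t) (Ioo a b) volume :=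
    hAint.integrableOn.sub hBint.integrableOn
  have h1 : ∫ t in Ioo a b, (A t - B t - C t) =
      (∫ t in Ioo a b, (A t - B t)) - ∫ t in Ioo a b, C t :=
    integral_sub hABint hCint.integrableOn
  have h2 : ∫ t in Ioo a b, (A t - B t) =
      (∫ t in Ioo a b, A t) - ∫ t in Ioo a b, B t :=
    integral_sub hAint.integrableOn hBint.integrableOn
  have hnonneg : 0 ≤ ∫ t in Ioo a b, (A t - B t - C t) :=
    setIntegral_nonneg measurableSet_Ioo key
  rw [h1, h2, hCzero, sub_zero] at hnonneg
  simpa [hAdef, hBdef, ge_iff_le, sub_nonneg] using hnonneg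
end
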